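/- Let M be the free monoid on the alphabet of positive integers {1, 2, 3, …}, with weight ω(n_1⋯n_r) = n_1 + ⋯ + n_r, and let C_n be the components of the Lazard right composition of (M, ω). In the monoid algebra ℚ[M], set Q_n = Σ_{w ∈ C_n} w and S_N = Σ_{w : ω(w) = N} w (both sums are finite). Then for every N ≥ 1: S_N = Σ Q_{n_1}^{e_1} · Q_{n_2}^{e_2} ⋯ Q_{n_r}^{e_r}, where the (finite) sum ranges over all r ≥ 1, all strictly increasing sequences n_1 < n_2 < ⋯ < n_r of positive integers and all exponents e_1, …, e_r ≥ 1 with n_1e_1 + ⋯ + n_re_r = N. (This is the specialization of the defining identity ∏→_{n≥1} (1 − t^n Q_n)^{-1} = Σ_N t^N S_N of the noncommutative Witt symmetric functions, and identifies the Q_n with the Lazard factorization F(Λ, ω) of the free monoid on the elementary symmetric functions.) -/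

import Mathlib

/-- The weight of a word over the alphabet of positive integers: the sum of its
letters. -/
def FreeMonoid.wt (w : FreeMonoid ℕ+) : ℕ :=
  (w.toList.map (fun x : ℕ+ => (x : ℕ))).sum

/-- The sets `Z_n` of the Lazard right composition of the free monoid on the
positive integers, weighted by the sum of the letters: `Z_1` is the set of
single-letter words and `Z_{n+1} = (Z_n \ C_n)·C_n*` where
`C_n = {w ∈ Z_n : ω(w) = n}`.  (The value at `0` is junk, set to `∅`.) -/
def lazardZ : ℕ → Set (FreeMonoid ℕ+)
  | 0 => ∅
  | 1 => Set.range FreeMonoid.of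
  | (n + 2) =>
      {w | ∃ z ∈ lazardZ (n + 1), z.wt ≠ n + 1 ∧
        ∃ u ∈ Submonoid.closure {v | v ∈ lazardZ (n + 1) ∧ v.wt = n + 1}, w = z * u}

/-- The sets `C_n = {w ∈ Z_n : ω(w) = n}` of the Lazard right composition. -/
def lazardC (n : ℕ) : Set (FreeMonoid ℕ+) :=
  {w | w ∈ lazardZ n ∧ w.wt = n}

/-- The noncommutative Witt symmetric function `Q_n`, specialized in the monoid
algebra `ℚ[M]`: the (finite) sum of the words in `C_n`. -/
noncomputable def Q (n : ℕ) : MonoidAlgebra ℚ (FreeMonoid ℕ+) :=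
  ∑ᶠ w ∈ lazardC n, MonoidAlgebra.of ℚ (FreeMonoid ℕ+) w

/-!
Lazard elimination: if `Z` is a code in a monoid and `C ⊆ Z`, then every product of elements of
`Z` factors uniquely as an element of `C*` times a product of elements of `Z' = (Z \ C) C*`, and
`Z'` is again a code. Starting from the alphabet `Z₁`, this gives a unique factorization of every
word as `c₁ ⋯ cₜ z` with `cⱼ ∈ Cⱼ*` and `z ∈ Z_{t+1}*`. For a word of weight `N` and `t = N` we get
`z = 1`, because the elements of `Z_{N+1}` have weight `> N`. As each `Cⱼ` is itself a code,
expanding `Q₁^{e₁} ⋯ Q_N^{e_N}` yields every word of `C₁^{e₁} ⋯ C_N^{e_N}` exactly once, and these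
sets, for the partitions `1^{e₁} ⋯ N^{e_N}` of `N`, partition the words of weight `N`.
-/

open Set Submonoid Pointwise

namespace List

variable {α : Type*} {p : α → Prop}

variable (p) in
def IsBlock : List α → Prop
  | [] => False
  | a :: l => ¬ p a ∧ ∀ x ∈ l, p x

theorem exists_eq_append_flatten_isBlock (l : List α) :
    ∃ (x : List α) (bs : List (List α)),
      (∀ a ∈ x, p a) ∧ (∀ b ∈ bs, IsBlock p b) ∧ l = x ++ bs.flatten := by
  induction l with
  | nil => exact ⟨[], [], by simp, by simp, rfl⟩
  | cons a l ih =>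
    obtain ⟨x, bs, hx, hbs, rfl⟩ := ih
    by_cases ha : p a
    · exact ⟨a :: x, bs, forall_mem_cons.2 ⟨ha, hx⟩, hbs, rfl⟩
    · exact ⟨[], (a :: x) :: bs, by simp, forall_mem_cons.2 ⟨⟨ha, hx⟩, hbs⟩, rfl⟩

theorem head?_flatten_of_isBlock {bs : List (List α)} (hbs : ∀ b ∈ bs, IsBlock p b) :
    ∀ a ∈ bs.flatten.head?, ¬ p a := by
  match bs, hbs with
  | [], _ => simp
  | [] :: _, hbs => exact (hbs [] mem_cons_self).elim
  | (a :: _) :: _, hbs => simpa using (hbs _ mem_cons_self).1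

/-- The prefix is recovered as the longest prefix satisfying `p`. -/
theorem append_inj_of_head? {x x' y y' : List α} (hx : ∀ a ∈ x, p a) (hx' : ∀ a ∈ x', p a)
    (hy : ∀ a ∈ y.head?, ¬ p a) (hy' : ∀ a ∈ y'.head?, ¬ p a) (h : x ++ y = x' ++ y') :
    x = x' ∧ y = y' := by
  classical
  have takeWhile_eq : ∀ {x y : List α}, (∀ a ∈ x, p a) → (∀ a ∈ y.head?, ¬ p a) →
      (x ++ y).takeWhile (fun a => decide (p a)) = x := by
    intro x y hx hy
    rw [takeWhile_append_of_pos (by simpa using hx)]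
    cases y with
    | nil => simp
    | cons a y => simpa using hy a rfl
  obtain rfl : x = x' := by rw [← takeWhile_eq hx hy, h, takeWhile_eq hx' hy']
  exact ⟨rfl, append_cancel_left h⟩

theorem flatten_inj_of_isBlock {bs bs' : List (List α)} (hbs : ∀ b ∈ bs, IsBlock p b)
    (hbs' : ∀ b ∈ bs', IsBlock p b) (h : bs.flatten = bs'.flatten) : bs = bs' := by
  induction bs generalizing bs' with
  | nil =>
    match bs', hbs' with
    | [], _ => rfl
    | [] :: _, hbs' => exact (hbs' [] mem_cons_self).elim
    | (_ :: _) :: _, _ => simp at h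
  | cons b bs ih =>
    match b, bs', hbs, hbs' with
    | [], _, hbs, _ => exact (hbs [] mem_cons_self).elim
    | _ :: _, [], _, _ => simp at h
    | _, [] :: _, _, hbs' => exact (hbs' [] mem_cons_self).elim
    | a :: t, (a' :: t') :: bs', hbs, hbs' =>
      rw [forall_mem_cons] at hbs hbs'
      simp only [flatten_cons, cons_append, cons.injEq] at h
      obtain ⟨rfl, h⟩ := h
      obtain ⟨rfl, htail⟩ := append_inj_of_head? hbs.1.2 hbs'.1.2
        (head?_flatten_of_isBlock hbs.2) (head?_flatten_of_isBlock hbs'.2) h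
      rw [ih hbs.2 hbs'.2 htail]

theorem append_flatten_inj_of_isBlock {x x' : List α} {bs bs' : List (List α)}
    (hx : ∀ a ∈ x, p a) (hx' : ∀ a ∈ x', p a)
    (hbs : ∀ b ∈ bs, IsBlock p b) (hbs' : ∀ b ∈ bs', IsBlock p b)
    (h : x ++ bs.flatten = x' ++ bs'.flatten) : x = x' ∧ bs = bs' := by
  obtain ⟨rfl, htail⟩ := append_inj_of_head? hx hx' (head?_flatten_of_isBlock hbs)
    (head?_flatten_of_isBlock hbs') h
  exact ⟨rfl, flatten_inj_of_isBlock hbs hbs' htail⟩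

end List

section Code

variable {M : Type*} [Monoid M]

def IsCode (S : Set M) : Prop :=
  InjOn List.prod {l : List M | ∀ x ∈ l, x ∈ S}

theorem IsCode.mono {S T : Set M} (hT : IsCode T) (h : S ⊆ T) : IsCode S :=
  Set.InjOn.mono (fun _ hl x hx => h (hl x hx)) hT

theorem IsCode.injOn_mul_closure {S : Set M} (hS : IsCode S) :
    InjOn (Function.uncurry (· * ·)) (S ×ˢ (closure S : Set M)) := by
  rintro ⟨a, b⟩ ⟨ha, hb⟩ ⟨a', b'⟩ ⟨ha', hb'⟩ h
  obtain ⟨l, hl, rfl⟩ := exists_list_of_mem_closure hb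
  obtain ⟨l', hl', rfl⟩ := exists_list_of_mem_closure hb'
  have : a :: l = a' :: l' :=
    hS (List.forall_mem_cons.2 ⟨ha, hl⟩) (List.forall_mem_cons.2 ⟨ha', hl'⟩) (by simpa using h)
  obtain ⟨rfl, rfl⟩ := List.cons.inj this
  rfl

theorem Set.BijOn.mul_assoc_prod {A C S T U : Set M}
    (h₁ : BijOn (Function.uncurry (· * ·)) (A ×ˢ S) U)
    (h₂ : BijOn (Function.uncurry (· * ·)) (C ×ˢ T) S) :
    BijOn (Function.uncurry (· * ·)) ((A * C) ×ˢ T) U := by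
  refine ⟨?_, ?_, ?_⟩
  · rintro ⟨_, t⟩ ⟨⟨a, ha, c, hc, rfl⟩, ht⟩
    simpa [mul_assoc] using h₁.mapsTo (mk_mem_prod ha (h₂.mapsTo (mk_mem_prod hc ht)))
  · rintro ⟨_, t⟩ ⟨⟨a, ha, c, hc, rfl⟩, ht⟩ ⟨_, t'⟩ ⟨⟨a', ha', c', hc', rfl⟩, ht'⟩ h
    have h₁' := h₁.injOn (mk_mem_prod ha (h₂.mapsTo (mk_mem_prod hc ht)))
      (mk_mem_prod ha' (h₂.mapsTo (mk_mem_prod hc' ht'))) (by simpa [mul_assoc] using h)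
    simp only [Prod.mk.injEq] at h₁'
    have h₂' := h₂.injOn (mk_mem_prod hc ht) (mk_mem_prod hc' ht') h₁'.2
    simp only [Prod.mk.injEq] at h₂'
    rw [h₁'.1, h₂'.1, h₂'.2]
  · intro u hu
    obtain ⟨⟨a, s⟩, ⟨ha, hs⟩, rfl⟩ := h₁.surjOn hu
    obtain ⟨⟨c, t⟩, ⟨hc, ht⟩, rfl⟩ := h₂.surjOn hs
    exact ⟨(a * c, t), ⟨mul_mem_mul ha hc, ht⟩, by simp [mul_assoc]⟩

variable {Z C : Set M}

theorem exists_isBlock_of_mem_diff_mul_closure (hC : C ⊆ Z) {y : M}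
    (hy : y ∈ (Z \ C) * (closure C : Set M)) :
    ∃ b, List.IsBlock (· ∈ C) b ∧ (∀ a ∈ b, a ∈ Z) ∧ b.prod = y := by
  obtain ⟨z, ⟨hz, hzC⟩, _, hu, rfl⟩ := hy
  obtain ⟨l, hl, rfl⟩ := exists_list_of_mem_closure hu
  exact ⟨z :: l, ⟨hzC, hl⟩, List.forall_mem_cons.2 ⟨hz, fun a ha => hC (hl a ha)⟩, rfl⟩

theorem exists_isBlock_map_prod_eq (hC : C ⊆ Z) {ys : List M}
    (hys : ∀ y ∈ ys, y ∈ (Z \ C) * (closure C : Set M)) :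
    ∃ bs : List (List M), (∀ b ∈ bs, List.IsBlock (· ∈ C) b ∧ ∀ a ∈ b, a ∈ Z) ∧
      bs.map List.prod = ys := by
  induction ys with
  | nil => exact ⟨[], by simp, rfl⟩
  | cons y ys ih =>
    rw [List.forall_mem_cons] at hys
    obtain ⟨b, hb, hbZ, rfl⟩ := exists_isBlock_of_mem_diff_mul_closure hC hys.1
    obtain ⟨bs, hbs, rfl⟩ := ih hys.2
    exact ⟨b :: bs, List.forall_mem_cons.2 ⟨⟨hb, hbZ⟩, hbs⟩, rfl⟩

theorem prod_mem_diff_mul_closure_of_isBlock {b : List M} (hb : List.IsBlock (· ∈ C) b)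
    (hbZ : ∀ a ∈ b, a ∈ Z) : b.prod ∈ (Z \ C) * (closure C : Set M) := by
  match b, hb with
  | z :: l, ⟨hzC, hl⟩ =>
    exact mul_mem_mul ⟨hbZ z List.mem_cons_self, hzC⟩
      (list_prod_mem fun a ha => subset_closure (hl a ha))

/-- **Lazard elimination**: `Z* = C* ((Z \ C) C*)*`, with unique factorizations. -/
theorem IsCode.bijOn_mul_closure_diff_mul_closure (hZ : IsCode Z) (hC : C ⊆ Z) :
    BijOn (Function.uncurry (· * ·))
      ((closure C : Set M) ×ˢ (closure ((Z \ C) * (closure C : Set M)) : Set M))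
      (closure Z : Set M) := by
  refine ⟨?_, ?_, ?_⟩
  · rintro ⟨c, w⟩ ⟨hc, hw⟩
    refine mul_mem (closure_mono hC hc) (closure_le.2 ?_ hw)
    rintro _ ⟨z, hz, u, hu, rfl⟩
    exact mul_mem (subset_closure hz.1) (closure_mono hC hu)
  · rintro ⟨c, w⟩ ⟨hc, hw⟩ ⟨c', w'⟩ ⟨hc', hw'⟩ h
    obtain ⟨x, hx, rfl⟩ := exists_list_of_mem_closure hc
    obtain ⟨x', hx', rfl⟩ := exists_list_of_mem_closure hc'
    obtain ⟨ys, hys, rfl⟩ := exists_list_of_mem_closure hw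
    obtain ⟨ys', hys', rfl⟩ := exists_list_of_mem_closure hw'
    obtain ⟨bs, hbs, rfl⟩ := exists_isBlock_map_prod_eq hC hys
    obtain ⟨bs', hbs', rfl⟩ := exists_isBlock_map_prod_eq hC hys'
    have hZ' : ∀ {x : List M} {bs : List (List M)}, (∀ a ∈ x, a ∈ C) →
        (∀ b ∈ bs, List.IsBlock (· ∈ C) b ∧ ∀ a ∈ b, a ∈ Z) → ∀ a ∈ x ++ bs.flatten, a ∈ Z :=
      fun hx hbs => List.forall_mem_append.2
        ⟨fun a ha => hC (hx a ha), List.forall_mem_flatten.2 fun b hb => (hbs b hb).2⟩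
    obtain ⟨rfl, rfl⟩ := List.append_flatten_inj_of_isBlock hx hx'
      (fun b hb => (hbs b hb).1) (fun b hb => (hbs' b hb).1)
      (hZ (hZ' hx hbs) (hZ' hx' hbs') (by simpa [List.prod_flatten] using h))
    rfl
  · intro w hw
    obtain ⟨l, hl, rfl⟩ := exists_list_of_mem_closure hw
    obtain ⟨x, bs, hx, hbs, rfl⟩ := List.exists_eq_append_flatten_isBlock (p := (· ∈ C)) l
    refine ⟨(x.prod, bs.flatten.prod), ⟨list_prod_mem fun a ha => subset_closure (hx a ha), ?_⟩,
      by simp⟩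
    rw [List.prod_flatten]
    refine list_prod_mem fun y hy => subset_closure ?_
    obtain ⟨b, hb, rfl⟩ := List.mem_map.1 hy
    exact prod_mem_diff_mul_closure_of_isBlock (hbs b hb)
      fun a ha => hl a (List.mem_append_right _ (List.mem_flatten_of_mem hb ha))

theorem IsCode.diff_mul_closure (hZ : IsCode Z) (hC : C ⊆ Z) :
    IsCode ((Z \ C) * (closure C : Set M)) := by
  intro ys hys ys' hys' h
  obtain ⟨bs, hbs, rfl⟩ := exists_isBlock_map_prod_eq hC hys
  obtain ⟨bs', hbs', rfl⟩ := exists_isBlock_map_prod_eq hC hys'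
  rw [List.flatten_inj_of_isBlock (fun b hb => (hbs b hb).1) (fun b hb => (hbs' b hb).1)
    (hZ (List.forall_mem_flatten.2 fun b hb => (hbs b hb).2)
      (List.forall_mem_flatten.2 fun b hb => (hbs' b hb).2) (by simpa [List.prod_flatten] using h))]

end Code

section CharSum

variable (k : Type*) {M : Type*} [Semiring k] [Monoid M]

noncomputable def charSum (S : Set M) : MonoidAlgebra k M :=
  ∑ᶠ w ∈ S, MonoidAlgebra.of k M w

theorem charSum_one : charSum k (1 : Set M) = 1 := by
  rw [charSum, ← singleton_one, finsum_mem_singleton, map_one]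

variable {k}

theorem charSum_mul {S T : Set M} (hS : S.Finite) (hT : T.Finite)
    (h : InjOn (Function.uncurry (· * ·)) (S ×ˢ T)) :
    charSum k (S * T) = charSum k S * charSum k T := by
  classical
  rw [charSum, ← image2_mul, ← image_uncurry_prod, finsum_mem_image h, charSum, charSum,
    finsum_mem_eq_finite_toFinset_sum _ hS, finsum_mem_eq_finite_toFinset_sum _ hT,
    finsum_mem_eq_finite_toFinset_sum _ (hS.prod hT), Finset.sum_mul_sum,
    ← Set.Finite.toFinset_prod hS hT, Finset.sum_product]
  simp

end CharSum

theorem Submonoid.pow_subset_closure {M : Type*} [Monoid M] (S : Set M) (k : ℕ) :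
    S ^ k ⊆ (closure S : Set M) := by
  induction k with
  | zero => simp [one_mem]
  | succ k ih =>
    rintro _ ⟨a, ha, b, hb, rfl⟩
    exact mul_mem (ih ha) (subset_closure hb)

theorem Submonoid.exists_pow_mem_of_mem_closure {M : Type*} [Monoid M] {S : Set M} {x : M}
    (hx : x ∈ closure S) : ∃ k, x ∈ S ^ k := by
  induction hx using closure_induction_left with
  | one => exact ⟨0, rfl⟩
  | mul_left x hx y _ ih =>
    obtain ⟨k, hk⟩ := ih
    exact ⟨k + 1, by rw [pow_succ']; exact mul_mem_mul hx hk⟩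

namespace FreeMonoid

@[simp]
theorem wt_one : (1 : FreeMonoid ℕ+).wt = 0 := rfl

@[simp]
theorem wt_mul (u v : FreeMonoid ℕ+) : (u * v).wt = u.wt + v.wt := by
  simp [wt]

@[simp]
theorem wt_of (a : ℕ+) : (of a).wt = a := by
  simp [wt]

/-- Words of weight `N` are the compositions of `N`. -/
theorem finite_setOf_wt_eq (N : ℕ) : {w : FreeMonoid ℕ+ | w.wt = N}.Finite := by
  refine Set.finite_coe_iff.1 (Finite.of_injective (β := Composition N)
    (fun w => ⟨w.1.toList.map ((↑) : ℕ+ → ℕ), by simp, w.2⟩) ?_)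
  intro w w' h
  exact Subtype.ext (toList.injective
    (List.map_injective_iff.2 PNat.coe_injective (congrArg Composition.blocks h)))

theorem wt_of_mem_pow {S : Set (FreeMonoid ℕ+)} {n : ℕ} (hS : ∀ z ∈ S, z.wt = n) :
    ∀ {k : ℕ} {w : FreeMonoid ℕ+}, w ∈ S ^ k → w.wt = n * k
  | 0, _, rfl => rfl
  | k + 1, _, ⟨u, hu, v, hv, rfl⟩ => by
    rw [wt_mul, wt_of_mem_pow hS hu, hS v hv]
    ring

theorem eq_one_of_mem_closure_of_wt_lt {S : Set (FreeMonoid ℕ+)} {n : ℕ}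
    (hS : ∀ z ∈ S, n ≤ z.wt) {w : FreeMonoid ℕ+} (hw : w ∈ closure S) (h : w.wt < n) : w = 1 := by
  obtain ⟨l, hl, rfl⟩ := exists_list_of_mem_closure hw
  cases l with
  | nil => rfl
  | cons z l =>
    have := hS z (hl z List.mem_cons_self)
    simp only [List.prod_cons, wt_mul] at h
    omega

theorem isCode_range_of : IsCode (range (of : ℕ+ → FreeMonoid ℕ+)) := by
  intro l hl l' hl' h
  obtain ⟨l, rfl⟩ := (Set.range_list_map of).symm ▸ hl
  obtain ⟨l', rfl⟩ := (Set.range_list_map of).symm ▸ hl'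
  have : l = l' := by
    simpa [toList_prod, Function.comp_def, ← List.flatMap_def] using congrArg toList h
  rw [this]

end FreeMonoid

open FreeMonoid

theorem lazardZ_add_two (n : ℕ) :
    lazardZ (n + 2) =
      (lazardZ (n + 1) \ lazardC (n + 1)) * (closure (lazardC (n + 1)) : Set _) := by
  ext w
  constructor
  · rintro ⟨z, hz, hwt, u, hu, rfl⟩
    exact ⟨z, ⟨hz, fun h => hwt h.2⟩, u, hu, rfl⟩
  · rintro ⟨z, ⟨hz, hzC⟩, u, hu, rfl⟩
    exact ⟨z, hz, fun h => hzC ⟨hz, h⟩, u, hu, rfl⟩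

theorem le_wt_of_mem_lazardZ : ∀ {n : ℕ} {z : FreeMonoid ℕ+}, z ∈ lazardZ (n + 1) → n + 1 ≤ z.wt
  | 0, _, ⟨a, rfl⟩ => by rw [wt_of]; exact a.pos
  | n + 1, _, hz => by
    rw [lazardZ_add_two] at hz
    obtain ⟨z, ⟨hz, hzC⟩, u, -, rfl⟩ := hz
    have := le_wt_of_mem_lazardZ hz
    have : z.wt ≠ n + 1 := fun h => hzC ⟨hz, h⟩
    simp only [wt_mul]
    omega

theorem finite_lazardC (n : ℕ) : (lazardC n).Finite :=
  (finite_setOf_wt_eq n).subset fun _ hw => hw.2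

/-- `C₁* C₂* ⋯ Cₜ*` -/
def lazardCStar (t : ℕ) : Set (FreeMonoid ℕ+) :=
  ((List.range' 1 t).map fun j => (closure (lazardC j) : Set (FreeMonoid ℕ+))).prod

theorem lazardCStar_succ (t : ℕ) :
    lazardCStar (t + 1) = lazardCStar t * (closure (lazardC (t + 1)) : Set _) := by
  simp [lazardCStar, List.range'_concat, add_comm]

theorem lazard_factorization (t : ℕ) :
    IsCode (lazardZ (t + 1)) ∧
      BijOn (Function.uncurry (· * ·)) (lazardCStar t ×ˢ (closure (lazardZ (t + 1)) : Set _))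
        univ := by
  induction t with
  | zero =>
    refine ⟨isCode_range_of, ?_⟩
    simp only [lazardCStar, List.range'_zero, List.map_nil, List.prod_nil, lazardZ,
      closure_range_of, coe_top]
    refine ⟨mapsTo_univ _ _, ?_, fun w _ => ⟨(1, w), ⟨rfl, trivial⟩, one_mul w⟩⟩
    rintro ⟨a, b⟩ ⟨rfl, -⟩ ⟨a', b'⟩ ⟨rfl, -⟩ h
    simpa using h
  | succ t ih =>
    obtain ⟨hZ, hbij⟩ := ih
    have hC : lazardC (t + 1) ⊆ lazardZ (t + 1) := fun _ h => h.1
    rw [lazardZ_add_two, lazardCStar_succ]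
    exact ⟨hZ.diff_mul_closure hC, hbij.mul_assoc_prod (hZ.bijOn_mul_closure_diff_mul_closure hC)⟩

theorem mem_lazardCStar_of_wt_eq {w : FreeMonoid ℕ+} {t : ℕ} (hw : w.wt = t) :
    w ∈ lazardCStar t := by
  obtain ⟨⟨p, z⟩, ⟨hp, hz⟩, rfl⟩ := (lazard_factorization t).2.surjOn (mem_univ w)
  obtain rfl : z = 1 := eq_one_of_mem_closure_of_wt_lt (fun _ => le_wt_of_mem_lazardZ) hz
    (by simp only [Function.uncurry_apply_pair, wt_mul] at hw; omega)
  simpa using hp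

/-- `C₁^{e₁} C₂^{e₂} ⋯ Cₜ^{eₜ}` -/
def lazardCPow (e : ℕ → ℕ) (t : ℕ) : Set (FreeMonoid ℕ+) :=
  ((List.range' 1 t).map fun j => lazardC j ^ e j).prod

section LazardCPow

variable (e : ℕ → ℕ) (t : ℕ)

theorem lazardCPow_succ : lazardCPow e (t + 1) = lazardCPow e t * lazardC (t + 1) ^ e (t + 1) := by
  simp [lazardCPow, List.range'_concat, add_comm]

theorem lazardCPow_congr {e'} (h : ∀ j, 1 ≤ j → j ≤ t → e j = e' j) :
    lazardCPow e t = lazardCPow e' t :=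
  congrArg List.prod <| List.map_congr_left fun j hj => by
    rw [List.mem_range'_1] at hj
    rw [h j hj.1 (by omega)]

theorem lazardCPow_subset_lazardCStar : lazardCPow e t ⊆ lazardCStar t := by
  induction t with
  | zero => exact subset_rfl
  | succ t ih =>
    rw [lazardCPow_succ, lazardCStar_succ]
    exact mul_subset_mul ih (pow_subset_closure _ _)

theorem wt_of_mem_lazardC_pow {n k : ℕ} {w : FreeMonoid ℕ+} (hw : w ∈ lazardC n ^ k) :
    w.wt = n * k :=
  wt_of_mem_pow (fun _ hz => hz.2) hw

theorem wt_of_mem_lazardCPow {w : FreeMonoid ℕ+} (hw : w ∈ lazardCPow e t) :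
    w.wt = ∑ j ∈ Finset.range (t + 1), j * e j := by
  induction t generalizing w with
  | zero => simp [show w = 1 from hw]
  | succ t ih =>
    rw [lazardCPow_succ] at hw
    obtain ⟨u, hu, v, hv, rfl⟩ := hw
    rw [wt_mul, ih hu, wt_of_mem_lazardC_pow hv, Finset.sum_range_succ _ (t + 1)]

theorem finite_lazardCPow : (lazardCPow e t).Finite :=
  (finite_setOf_wt_eq _).subset fun _ => wt_of_mem_lazardCPow e t

theorem injOn_mul_lazardCPow :
    InjOn (Function.uncurry (· * ·)) (lazardCPow e t ×ˢ (lazardC (t + 1) ^ e (t + 1))) :=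
  (lazard_factorization t).2.injOn.mono <| Set.prod_mono (lazardCPow_subset_lazardCStar e t)
    fun _ hx => closure_mono (fun _ h => h.1) (pow_subset_closure _ _ hx)

/-- The factorization separates the factors, and a factor in `Cⱼ^k` has weight `j k`. -/
theorem eq_of_mem_lazardCPow {e'} {w : FreeMonoid ℕ+} (hw : w ∈ lazardCPow e t)
    (hw' : w ∈ lazardCPow e' t) : ∀ j, 1 ≤ j → j ≤ t → e j = e' j := by
  induction t generalizing w with
  | zero => intro j _ _; omega
  | succ t ih =>
    rw [lazardCPow_succ] at hw hw'
    obtain ⟨u, hu, v, hv, rfl⟩ := hw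
    obtain ⟨u', hu', v', hv', h⟩ := hw'
    have huv := (lazard_factorization t).2.injOn
      (mk_mem_prod (lazardCPow_subset_lazardCStar e t hu)
        (closure_mono (fun _ h => h.1) (pow_subset_closure _ _ hv)))
      (mk_mem_prod (lazardCPow_subset_lazardCStar e' t hu')
        (closure_mono (fun _ h => h.1) (pow_subset_closure _ _ hv'))) h.symm
    simp only [Prod.mk.injEq] at huv
    obtain ⟨rfl, rfl⟩ := huv
    intro j hj hjt
    rcases Nat.lt_or_eq_of_le hjt with hjt | rfl
    · exact ih hu hu' j hj (by omega)
    · have := (wt_of_mem_lazardC_pow hv).symm.trans (wt_of_mem_lazardC_pow hv')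
      exact Nat.eq_of_mul_eq_mul_left (by omega) this

theorem exists_mem_lazardCPow_of_mem_lazardCStar {w : FreeMonoid ℕ+} (hw : w ∈ lazardCStar t) :
    ∃ e : ℕ → ℕ, e 0 = 0 ∧ (∀ j, t < j → e j = 0) ∧ w ∈ lazardCPow e t := by
  induction t generalizing w with
  | zero => exact ⟨0, rfl, fun _ _ => rfl, hw⟩
  | succ t ih =>
    rw [lazardCStar_succ] at hw
    obtain ⟨u, hu, v, hv, rfl⟩ := hw
    obtain ⟨e, he0, het, hue⟩ := ih hu
    obtain ⟨k, hk⟩ := exists_pow_mem_of_mem_closure hv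
    refine ⟨Function.update e (t + 1) k, by simp [he0], fun j hj => ?_, ?_⟩
    · rw [Function.update_of_ne (by omega)]
      exact het j (by omega)
    · rw [lazardCPow_succ, Function.update_self,
        lazardCPow_congr _ t fun j _ hj => Function.update_of_ne (by omega) _ _]
      exact mul_mem_mul hue hk

end LazardCPow

theorem Q_eq_charSum (n : ℕ) : Q n = charSum ℚ (lazardC n) := rfl

theorem Q_succ_pow (n k : ℕ) : Q (n + 1) ^ k = charSum ℚ (lazardC (n + 1) ^ k) := by
  have hcode : IsCode (lazardC (n + 1)) := (lazard_factorization n).1.mono fun _ h => h.1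
  induction k with
  | zero => rw [pow_zero, pow_zero, charSum_one]
  | succ k ih =>
    rw [pow_succ', pow_succ', ih, Q_eq_charSum, charSum_mul (finite_lazardC _)
      ((finite_setOf_wt_eq _).subset fun _ => wt_of_mem_lazardC_pow)
      (hcode.injOn_mul_closure.mono (Set.prod_mono subset_rfl (pow_subset_closure _ _)))]

theorem prod_Q_pow_eq_charSum (e : ℕ → ℕ) (t : ℕ) :
    ((List.range' 1 t).map fun n => Q n ^ e n).prod = charSum ℚ (lazardCPow e t) := by
  induction t with
  | zero => exact (charSum_one ℚ).symm
  | succ t ih =>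
    rw [List.range'_concat, List.map_append, List.prod_append, ih, lazardCPow_succ,
      charSum_mul (finite_lazardCPow e t)
        ((finite_setOf_wt_eq _).subset fun _ => wt_of_mem_lazardC_pow)
        (injOn_mul_lazardCPow e t)]
    simp [add_comm 1 t, Q_succ_pow]

/-- The exponent vectors `(e₁, …, e_N)` of the partitions `1^{e₁} ⋯ N^{e_N}` of `N`. -/
def partitionExponents (N : ℕ) : Set (ℕ → ℕ) :=
  {e | e 0 = 0 ∧ (∀ n, N < n → e n = 0) ∧ ∑ n ∈ Finset.range (N + 1), n * e n = N}

theorem finite_partitionExponents (N : ℕ) : (partitionExponents N).Finite := by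
  refine (finite_range fun g : Fin (N + 1) → Fin (N + 1) =>
    fun j => if h : j < N + 1 then (g ⟨j, h⟩ : ℕ) else 0).subset ?_
  rintro e ⟨he0, heN, hsum⟩
  have hle : ∀ j, e j ≤ N := by
    intro j
    rcases Nat.eq_zero_or_pos j with rfl | hj
    · omega
    by_cases hjN : j ≤ N
    · calc e j ≤ j * e j := Nat.le_mul_of_pos_left _ hj
        _ ≤ N := hsum ▸ Finset.single_le_sum (f := fun n => n * e n) (fun _ _ => Nat.zero_le _)
            (Finset.mem_range.2 (by omega))
    · rw [heN j (by omega)]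
      exact Nat.zero_le _
  refine ⟨fun i => ⟨e i, Nat.lt_succ_of_le (hle i)⟩, funext fun j => ?_⟩
  dsimp only
  split_ifs with h
  · rfl
  · exact (heN j (by omega)).symm

theorem pairwiseDisjoint_lazardCPow (N : ℕ) :
    (partitionExponents N).PairwiseDisjoint (lazardCPow · N) := by
  intro e he e' he' hne
  refine Set.disjoint_left.2 fun w hw hw' => hne (funext fun j => ?_)
  rcases Nat.eq_zero_or_pos j with rfl | hj
  · rw [he.1, he'.1]
  by_cases hjN : j ≤ N
  · exact eq_of_mem_lazardCPow e N hw hw' j hj hjN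
  · rw [he.2.1 j (by omega), he'.2.1 j (by omega)]

theorem biUnion_partitionExponents_lazardCPow (N : ℕ) :
    ⋃ e ∈ partitionExponents N, lazardCPow e N = {w | w.wt = N} := by
  ext w
  simp only [mem_iUnion, mem_ofPred_eq, exists_prop]
  constructor
  · rintro ⟨e, he, hw⟩
    rw [wt_of_mem_lazardCPow e N hw, he.2.2]
  · intro hw
    obtain ⟨e, he0, heN, hwe⟩ :=
      exists_mem_lazardCPow_of_mem_lazardCStar N (mem_lazardCStar_of_wt_eq hw)
    exact ⟨e, ⟨he0, heN, (wt_of_mem_lazardCPow e N hwe).symm.trans hw⟩, hwe⟩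

theorem complete_eq_sum_of_Q_products_general (N : ℕ) :
    (∑ᶠ w ∈ {w : FreeMonoid ℕ+ | w.wt = N}, MonoidAlgebra.of ℚ (FreeMonoid ℕ+) w) =
    ∑ᶠ e ∈ {e : ℕ → ℕ | e 0 = 0 ∧ (∀ n, N < n → e n = 0) ∧
        ∑ n ∈ Finset.range (N + 1), n * e n = N},
      ((List.range' 1 N).map (fun n => Q n ^ e n)).prod := by
  change charSum ℚ {w : FreeMonoid ℕ+ | w.wt = N} = ∑ᶠ e ∈ partitionExponents N, _
  rw [finsum_mem_congr rfl fun e _ => prod_Q_pow_eq_charSum e N,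
    ← biUnion_partitionExponents_lazardCPow, charSum]
  exact finsum_mem_biUnion (pairwiseDisjoint_lazardCPow N) (finite_partitionExponents N)
    fun e _ => finite_lazardCPow e N

/-- The complete function `S_N = Σ_{ω(w)=N} w` decomposes as the sum of the
products `Q_{n₁}^{e₁} ⋯ Q_{n_r}^{e_r}` over all `n₁ < ⋯ < n_r` and
`e₁, …, e_r ≥ 1` with `n₁e₁ + ⋯ + n_re_r = N`; such data are encoded by the
functions `e : ℕ → ℕ` with `e 0 = 0`, support contained in `{1, …, N}` and
`Σ n·e(n) = N`, the product being taken in increasing order of `n`. -/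
theorem complete_eq_sum_of_Q_products (N : ℕ) (hN : 1 ≤ N) :
    (∑ᶠ w ∈ {w : FreeMonoid ℕ+ | w.wt = N}, MonoidAlgebra.of ℚ (FreeMonoid ℕ+) w) =
    ∑ᶠ e ∈ {e : ℕ → ℕ | e 0 = 0 ∧ (∀ n, N < n → e n = 0) ∧
        ∑ n ∈ Finset.range (N + 1), n * e n = N},
      ((List.range' 1 N).map (fun n => Q n ^ e n)).prod :=
  complete_eq_sum_of_Q_products_general N
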